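/- For all natural numbers n, x, and y, iack x n y < ack (n+1) (x + y); that is, iterating the level-n Ackermann function x times starting from y is strictly bounded by the level-(n+1) Ackermann function at x + y. -/
import Mathlib


namespace AckPaper

def ack : Nat → Nat → Nat
  | 0, x => x + 2
  | _ + 1, 0 => 2
  | n + 1, x + 1 => ack n (ack (n + 1) x)

def iack : Nat → Nat → Nat → Nat
  | 0, _, x => x
  | h + 1, n, x => ack n (iack h n x)

theorem ack_lt : ∀ n x : Nat, x < ack n x := by
  intro n
  induction n with
  | zero => intro x; simp [ack]
  | succ n ih =>
    intro x
    induction x with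
    | zero => simp [ack]
    | succ x ihx =>
      have := ih (ack (n+1) x)
      simp only [ack]
      omega

theorem ack_succ_lt (n x : Nat) : ack n x < ack n (x + 1) := by
  match n with
  | 0 => simp [ack]
  | n + 1 =>
    have h : ack (n+1) (x+1) = ack n (ack (n+1) x) := by simp [ack]
    rw [h]; exact ack_lt n _

theorem ack_mono (n : Nat) {x y : Nat} (h : x < y) : ack n x < ack n y := by
  induction y with
  | zero => omega
  | succ y ih =>
    have hc : x < y ∨ x = y := by omega
    rcases hc with h | h
    · exact lt_trans (ih h) (ack_succ_lt n y)
    · subst h; exact ack_succ_lt n x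

theorem stmt11 : ∀ n x y : Nat, iack x n y < ack (n + 1) (x + y) := by
  intro n x
  induction x with
  | zero => intro y; simpa [iack] using ack_lt (n+1) y
  | succ x ih =>
    intro y
    have h1 : ack n (iack x n y) < ack n (ack (n+1) (x+y)) := ack_mono n (ih y)
    have h2 : ack n (ack (n+1) (x+y)) = ack (n+1) (x + y + 1) := by simp [ack]
    show ack n (iack x n y) < ack (n+1) (x + 1 + y)
    rw [Nat.add_right_comm]
    omega

end AckPaper
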